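/- Let f : ℝⁿ → ℝ be continuously differentiable and suppose for all perturbations ΔW with ‖ΔW‖ ≤ η‖W‖ the gradient satisfies ‖∇f(W + ΔW) - ∇f(W)‖ ≤ ((1+η)^L - 1)·‖∇f(W)‖. If ∇f(W) ≠ 0 and (1+η)^L - 1 < 1, then the update W' = W - η·(‖W‖/‖∇f(W)‖)·∇f(W) satisfies f(W') < f(W). -/

import Mathlib

/-!
Move along `Δ = -c • ∇f(W)` with `c = η ‖W‖ / ‖∇f(W)‖`, so that `‖Δ‖ = η ‖W‖` and every point
of the segment `[W, W + Δ]` lies in the trust region. There the trust condition with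
`(1+η)^L - 1 < 1` makes `∇f` strictly closer to `∇f(W)` than `‖∇f(W)‖`, hence at positive
angle to `∇f(W)`; so the directional derivative along `Δ` is negative on the whole segment,
and the mean value theorem gives `f(W + Δ) < f(W)`.
-/

open InnerProductSpace Set

variable {E : Type*} [NormedAddCommGroup E] [InnerProductSpace ℝ E]

theorem real_inner_pos_of_norm_sub_lt {u v : E} (h : ‖u - v‖ < ‖v‖) : 0 < ⟪u, v⟫_ℝ := by
  have hsq : ‖u - v‖ ^ 2 < ‖v‖ ^ 2 := by gcongr
  rw [norm_sub_sq_real] at hsq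
  nlinarith [sq_nonneg ‖u‖]

variable [CompleteSpace E]

theorem hasDerivAt_comp_add_smul {f : E → ℝ} (hf : Differentiable ℝ f) (x d : E) (t : ℝ) :
    HasDerivAt (fun s : ℝ => f (x + s • d)) ⟪gradient f (x + t • d), d⟫_ℝ t := by
  have hline : HasDerivAt (fun s : ℝ => x + s • d) d t := by
    simpa using ((hasDerivAt_id t).smul_const d).const_add x
  simpa [Function.comp_def] using
    (hf (x + t • d)).hasGradientAt.hasFDerivAt.comp_hasDerivAt t hline

theorem lt_of_inner_gradient_neg_on_segment {f : E → ℝ} (hf : Differentiable ℝ f) {x d : E}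
    (hneg : ∀ t ∈ Ioo (0 : ℝ) 1, ⟪gradient f (x + t • d), d⟫_ℝ < 0) : f (x + d) < f x := by
  obtain ⟨t, ht, hslope⟩ := exists_hasDerivAt_eq_slope (fun s : ℝ => f (x + s • d))
    (fun t => ⟪gradient f (x + t • d), d⟫_ℝ) zero_lt_one
    (hf.continuous.comp (by fun_prop)).continuousOn
    (fun t _ => hasDerivAt_comp_add_smul hf x d t)
  have := hneg t ht
  simp only [one_smul, zero_smul, add_zero, sub_zero, div_one] at hslope
  linarith

/-- Single-parameter-group Fromage descent guarantee: if the gradient obeys the deep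
relative trust bound within relative radius `η` and `(1+η)^L - 1 < 1`, then the Fromage
update strictly decreases the loss. -/
theorem fromage_descent {m : ℕ} (L : ℕ)
    (f : EuclideanSpace ℝ (Fin m) → ℝ) (hf : ContDiff ℝ 1 f)
    (W : EuclideanSpace ℝ (Fin m)) (η : ℝ) (hη : 0 < η)
    (hW : W ≠ 0) (hg : gradient f W ≠ 0)
    (htrust : ∀ ΔW : EuclideanSpace ℝ (Fin m), ‖ΔW‖ ≤ η * ‖W‖ →
      ‖gradient f (W + ΔW) - gradient f W‖ ≤ ((1 + η) ^ L - 1) * ‖gradient f W‖)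
    (hsmall : (1 + η) ^ L - 1 < 1) :
    f (W - (η * (‖W‖ / ‖gradient f W‖)) • gradient f W) < f W := by
  set g := gradient f W
  set c := η * (‖W‖ / ‖g‖)
  have hg_pos : 0 < ‖g‖ := norm_pos_iff.mpr hg
  have hc : 0 < c := by positivity [norm_pos_iff.mpr hW]
  rw [sub_eq_add_neg, ← neg_smul]
  refine lt_of_inner_gradient_neg_on_segment (hf.differentiable one_ne_zero) fun t ht => ?_
  have hstep : ‖t • (-c) • g‖ ≤ η * ‖W‖ := by
    have hc_norm : c * ‖g‖ = η * ‖W‖ := by simp only [c]; field_simp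
    rw [norm_smul, norm_smul, Real.norm_of_nonneg ht.1.le, norm_neg, Real.norm_of_nonneg hc.le,
      hc_norm]
    exact mul_le_of_le_one_left (by positivity) ht.2.le
  have hclose : ‖gradient f (W + t • (-c) • g) - g‖ < ‖g‖ :=
    (htrust _ hstep).trans_lt (mul_lt_of_lt_one_left hg_pos hsmall)
  rw [real_inner_smul_right]
  exact mul_neg_of_neg_of_pos (neg_neg_of_pos hc) (real_inner_pos_of_norm_sub_lt hclose)
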